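/- Let n ≥ 4 and 3 ≤ j < ℓ ≤ n. Work in ℝ[x_2, …, x_n, u, w_j, w_ℓ] (n+2 variables), let e'_m denote the m-th elementary symmetric polynomial in x_2, …, x_n, let h_{ℓ−j} denote the (ℓ−j)-th elementary symmetric polynomial in x_2, …, x_{ℓ−1}, and set K̃ = u + w_j + w_ℓ, Q_ℓ = x_n · w_ℓ · (x_ℓ x_{ℓ+1} ⋯ x_{n−1}), and Q_j = x_n · w_j · (x_j x_{j+1} ⋯ x_{n−1}) (empty products being 1). Consider the n+2 polynomials: e'_1, e'_2, …, e'_{n−1}; e'_1 + K̃; e'_{n+2−ℓ} + e'_{n+1−ℓ} · K̃ − Q_ℓ; and e'_{n+2−j} + e'_{n+1−j} · K̃ − Q_ℓ · h_{ℓ−j} − Q_j. Then the determinant of the Jacobian matrix of these n+2 polynomials with respect to the n+2 variables is a nonzero polynomial; equivalently, the n+2 polynomials are algebraically independent over ℝ. -/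

import Mathlib

open Finset MvPolynomial

/-- The `m`-th elementary symmetric polynomial of the values `v i` for `i ∈ s`. -/
noncomputable def esymOn {σ R : Type*} [CommSemiring R] (s : Finset σ) (m : ℕ) (v : σ → R) : R :=
  ∑ t ∈ Finset.powersetCard m s, ∏ i ∈ t, v i

/-- Work in `ℝ[x₂, …, xₙ, u, w_j, w_ℓ]` (`n + 2` variables): `x_{t+2} = X ⟨t⟩` for
`t : Fin (n-1)`, `u = X ⟨n-1⟩`, `w_j = X ⟨n⟩`, `w_ℓ = X ⟨n+1⟩`. -/
noncomputable def x19 (n : ℕ) (t : Fin (n - 1)) : MvPolynomial (Fin (n + 2)) ℝ :=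
  X ⟨t.1, by have := t.isLt; omega⟩

/-- `e'_m`: the `m`-th elementary symmetric polynomial in `x₂, …, xₙ`. -/
noncomputable def e19 (n m : ℕ) : MvPolynomial (Fin (n + 2)) ℝ :=
  esymOn Finset.univ m (x19 n)

/-- `h_m` over the variables `x₂, …, x_{ℓ-1}`: used for `h_{ℓ-j}`, the `(ℓ-j)`-th elementary
symmetric polynomial in `x₂, …, x_{ℓ-1}`. -/
noncomputable def h19 (n ℓ m : ℕ) : MvPolynomial (Fin (n + 2)) ℝ :=
  esymOn (Finset.univ.filter (fun t : Fin (n - 1) => t.1 + 2 < ℓ)) m (x19 n)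

/-- `K̃ = u + w_j + w_ℓ`. -/
noncomputable def K19 (n : ℕ) : MvPolynomial (Fin (n + 2)) ℝ :=
  X ⟨n - 1, by omega⟩ + X ⟨n, by omega⟩ + X ⟨n + 1, by omega⟩

/-- `Q_ℓ = xₙ · w_ℓ · (x_ℓ x_{ℓ+1} ⋯ x_{n-1})` (empty products being `1`). -/
noncomputable def Ql19 (n : ℕ) (hn : 4 ≤ n) (ℓ : ℕ) : MvPolynomial (Fin (n + 2)) ℝ :=
  x19 n ⟨n - 2, by omega⟩ * X ⟨n + 1, by omega⟩ *
    ∏ t ∈ Finset.univ.filter (fun t : Fin (n - 1) => ℓ ≤ t.1 + 2 ∧ t.1 + 2 < n), x19 n t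

/-- `Q_j = xₙ · w_j · (x_j x_{j+1} ⋯ x_{n-1})` (empty products being `1`). -/
noncomputable def Qj19 (n : ℕ) (hn : 4 ≤ n) (j : ℕ) : MvPolynomial (Fin (n + 2)) ℝ :=
  x19 n ⟨n - 2, by omega⟩ * X ⟨n, by omega⟩ *
    ∏ t ∈ Finset.univ.filter (fun t : Fin (n - 1) => j ≤ t.1 + 2 ∧ t.1 + 2 < n), x19 n t

/-- The `n + 2` polynomials `e'₁, …, e'_{n-1}`, `e'₁ + K̃`,
`e'_{n+2-ℓ} + e'_{n+1-ℓ} K̃ - Q_ℓ`, and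
`e'_{n+2-j} + e'_{n+1-j} K̃ - Q_ℓ h_{ℓ-j} - Q_j`. -/
noncomputable def f19 (n : ℕ) (hn : 4 ≤ n) (j ℓ : ℕ) (m : Fin (n + 2)) :
    MvPolynomial (Fin (n + 2)) ℝ :=
  if m.1 < n - 1 then e19 n (m.1 + 1)
  else if m.1 = n - 1 then e19 n 1 + K19 n
  else if m.1 = n then e19 n (n + 2 - ℓ) + e19 n (n + 1 - ℓ) * K19 n - Ql19 n hn ℓ
  else
    e19 n (n + 2 - j) + e19 n (n + 1 - j) * K19 n -
      Ql19 n hn ℓ * h19 n ℓ (ℓ - j) - Qj19 n hn j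

/-!
Order the variables as `x₂, …, xₙ` followed by the three rates `u, w_j, w_ℓ`. Since
`e'₁, …, e'_{n-1}` involve only the `x`'s, the Jacobian is block lower triangular. Its `x`-block
`(e'_m(x without x_v))_{m,v}` is the Jacobian of the elementary symmetric polynomials; by Vieta,
its transpose times the Vandermonde matrix `((-x_w)^{n-2-m})_{m,w}` is the diagonal matrix with
entries `∏_{i ≠ v} (x_i - x_v)`, so it is nonsingular. Writing `Q_k = w_k P_k`, the rate block is
`[1, 1, 1; a, a, a - P_ℓ; b, b - P_j, b - P_ℓ h_{ℓ-j}]` with `a = e'_{n+1-ℓ}`, `b = e'_{n+1-j}`,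
of determinant `-P_ℓ P_j ≠ 0`.

Algebraic independence then follows from the Jacobian criterion: for a relation `P` of minimal
degree, the chain rule makes `(∂P/∂y_k (f))_k` a nonzero vector in the left kernel of the Jacobian.
-/

open scoped Matrix

section esymOn

variable {ι R : Type*}

theorem esymOn_insert [CommSemiring R] [DecidableEq ι] {a : ι} {s : Finset ι} (ha : a ∉ s)
    (m : ℕ) (v : ι → R) :
    esymOn (insert a s) (m + 1) v = esymOn s (m + 1) v + v a * esymOn s m v := by
  rw [esymOn, powersetCard_succ_insert ha, sum_union, sum_image, esymOn, esymOn, mul_sum]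
  · refine congrArg _ (sum_congr rfl fun t ht => prod_insert fun hat => ha ?_)
    exact (mem_powersetCard.1 ht).1 hat
  · intro t ht t' ht' h
    have hat : a ∉ t := fun hat => ha ((mem_powersetCard.1 ht).1 hat)
    have hat' : a ∉ t' := fun hat => ha ((mem_powersetCard.1 ht').1 hat)
    rw [← erase_insert hat, h, erase_insert hat']
  · refine disjoint_left.2 fun t ht ht' => ha ?_
    obtain ⟨t', -, rfl⟩ := mem_image.1 ht'
    exact (mem_powersetCard.1 ht).1 (mem_insert_self a t')

theorem esymOn_mem_adjoin [CommSemiring R] {A : Type*} [CommSemiring A] [Algebra R A]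
    (s : Finset ι) (m : ℕ) (v : ι → A) : esymOn s m v ∈ Algebra.adjoin R (v '' s) :=
  Subalgebra.sum_mem _ fun _ ht => Subalgebra.prod_mem _ fun i hi =>
    Algebra.subset_adjoin ⟨i, (mem_powersetCard.1 ht).1 hi, rfl⟩

theorem prod_add_eq_sum_esymOn [CommRing R] (s : Finset ι) (t : ι → R) (x : R) :
    ∏ i ∈ s, (x + t i) = ∑ m ∈ range (#s + 1), esymOn s m t * x ^ (#s - m) := by
  have := congrArg (Polynomial.eval x) (Multiset.prod_X_add_C_eq_sum_esymm (s.val.map t))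
  simpa [Polynomial.eval_prod, Polynomial.eval_finsetSum, Finset.esymm_map_val, esymOn, mul_comm]
    using this

theorem det_esymOn_erase_ne_zero [CommRing R] [IsDomain R] {k : ℕ} {t : Fin k → R}
    (ht : Function.Injective t) :
    (Matrix.of fun m v : Fin k => esymOn (univ.erase v) m t).det ≠ 0 := by
  set A := Matrix.of fun m v : Fin k => esymOn (univ.erase v) m t
  let V : Matrix (Fin k) (Fin k) R := Matrix.of fun m w => (-t w) ^ (k - 1 - m)
  -- row `v` of `Aᵀ * V` lists the values at the points `-t w` of `∏_{i ≠ v} (X + t i)`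
  have hAV : Aᵀ * V = Matrix.diagonal fun v => ∏ i ∈ univ.erase v, (-t v + t i) := by
    refine Matrix.ext fun v w => ?_
    have hsum := prod_add_eq_sum_esymOn (univ.erase v) t (-t w)
    rw [card_erase_of_mem (mem_univ v), card_univ, Fintype.card_fin, Nat.sub_add_cancel v.pos,
      ← Fin.sum_univ_eq_sum_range] at hsum
    rw [Matrix.mul_apply, Matrix.diagonal_apply]
    simp only [Matrix.transpose_apply, A, V, Matrix.of_apply]
    rw [← hsum]
    split_ifs with hvw
    · rw [hvw]
    · exact prod_eq_zero (mem_erase.2 ⟨Ne.symm hvw, mem_univ w⟩) (neg_add_cancel _)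
  intro hA
  have hdet := congrArg Matrix.det hAV
  rw [Matrix.det_mul, Matrix.det_transpose, hA, zero_mul, Matrix.det_diagonal] at hdet
  refine prod_ne_zero_iff.2 (fun v _ => prod_ne_zero_iff.2 fun i hi => ?_) hdet.symm
  rw [neg_add_eq_sub]
  exact sub_ne_zero.2 (ht.ne (ne_of_mem_erase hi))

end esymOn

theorem Matrix.det_fin_three_ones_sub {R : Type*} [CommRing R] (a b p q r : R) :
    !![1, 1, 1; a, a, a - p; b, b - q, b - r].det = -(p * q) := by
  rw [Matrix.det_fin_three]
  simp only [Matrix.of_apply, Matrix.cons_val', Matrix.cons_val_zero, Matrix.cons_val_one,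
    Matrix.cons_val_two, Matrix.empty_val', Matrix.cons_val_fin_one, Matrix.head_cons,
    Matrix.tail_cons, Matrix.head_fin_const]
  ring

namespace MvPolynomial

variable {R σ : Type*}

noncomputable def jacobianMatrix [CommSemiring R] (f : σ → MvPolynomial σ R) :
    Matrix σ σ (MvPolynomial σ R) :=
  Matrix.of fun k i => pderiv i (f k)

theorem pderiv_eq_zero_of_mem_adjoin [CommSemiring R] {i : σ} {S : Set (MvPolynomial σ R)}
    (hS : ∀ q ∈ S, pderiv i q = 0) {p : MvPolynomial σ R} (hp : p ∈ Algebra.adjoin R S) :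
    pderiv i p = 0 :=
  Derivation.eqOn_adjoin (D2 := 0) hS hp

theorem pderiv_esymOn_insert {ι : Type*} [CommSemiring R] [DecidableEq ι] {e : ι → σ}
    (he : Function.Injective e) {a : ι} {s : Finset ι} (ha : a ∉ s) (m : ℕ) :
    pderiv (e a) (esymOn (insert a s) (m + 1) fun i => (X (e i) : MvPolynomial σ R)) =
      esymOn s m fun i => X (e i) := by
  have hzero : ∀ k, pderiv (e a) (esymOn s k fun i => (X (e i) : MvPolynomial σ R)) = 0 :=
    fun k => pderiv_eq_zero_of_mem_adjoin
      (by rintro _ ⟨i, hi, rfl⟩; exact pderiv_X_of_ne (he.ne (ne_of_mem_of_not_mem hi ha)))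
      (esymOn_mem_adjoin s k _)
  rw [esymOn_insert ha, map_add, pderiv_mul, hzero, hzero, pderiv_X_self]
  ring

theorem pderiv_esymOn_succ {ι : Type*} [CommSemiring R] [DecidableEq ι] {e : ι → σ}
    (he : Function.Injective e) {a : ι} {s : Finset ι} (ha : a ∈ s) (m : ℕ) :
    pderiv (e a) (esymOn s (m + 1) fun i => (X (e i) : MvPolynomial σ R)) =
      esymOn (s.erase a) m fun i => X (e i) := by
  rw [← pderiv_esymOn_insert he (notMem_erase a s), insert_erase ha]

variable [CommRing R]

theorem eq_C_coeff_zero_of_forall_pderiv_eq_zero [IsDomain R] [CharZero R]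
    {p : MvPolynomial σ R} (h : ∀ i, pderiv i p = 0) : p = C (p.coeff 0) := by
  classical
  ext m
  rw [coeff_C]
  split_ifs with hm
  · rw [hm]
  obtain ⟨i, hi⟩ : ∃ i, m i ≠ 0 := by
    by_contra! hall
    exact hm (Finsupp.ext hall).symm
  have hcoeff := coeff_pderiv (i := i) p (m - Finsupp.single i 1)
  rw [h i, coeff_zero, tsub_add_cancel_of_le (Finsupp.single_le_iff.2 (by omega))] at hcoeff
  exact (mul_eq_zero.1 hcoeff.symm).resolve_right (by norm_cast)

theorem totalDegree_pderiv_lt {p : MvPolynomial σ R} {i : σ} (h : pderiv i p ≠ 0) :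
    (pderiv i p).totalDegree < p.totalDegree := by
  obtain ⟨m, hm, hdeg⟩ := exists_mem_eq_sup _ (support_nonempty.2 h)
    fun s : σ →₀ ℕ => s.sum fun _ e => e
  rw [mem_support_iff, coeff_pderiv] at hm
  have hle := le_totalDegree (mem_support_iff.2 (left_ne_zero_of_mul hm))
  rw [Finsupp.sum_add_index' (fun _ => rfl) (fun _ _ _ => rfl),
    Finsupp.sum_single_index rfl] at hle
  rw [totalDegree, hdeg]
  omega

theorem pderiv_aeval {τ : Type*} [Fintype τ] [DecidableEq τ] (f : τ → MvPolynomial σ R)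
    (p : MvPolynomial τ R) (i : σ) :
    pderiv i (aeval f p) = ∑ k, aeval f (pderiv k p) * pderiv i (f k) := by
  induction p using MvPolynomial.induction_on with
  | C a => simp
  | add p q hp hq => simp only [map_add, hp, hq, add_mul, sum_add_distrib]
  | mul_X p k hp =>
    simp only [map_mul, aeval_X, pderiv_mul, hp, pderiv_X, Pi.single_apply, mul_ite, mul_one,
      mul_zero, apply_ite (aeval f), map_zero, ite_mul, zero_mul, map_add, add_mul,
      sum_add_distrib, sum_ite_eq, mem_univ, if_true, sum_mul]
    congr 1
    exact sum_congr rfl fun _ _ => by ring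

theorem algebraicIndependent_of_det_jacobianMatrix_ne_zero [Fintype σ] [DecidableEq σ]
    [IsDomain R] [CharZero R] {f : σ → MvPolynomial σ R} (h : (jacobianMatrix f).det ≠ 0) :
    AlgebraicIndependent R f := by
  rw [algebraicIndependent_iff]
  intro p
  induction hd : p.totalDegree using Nat.strong_induction_on generalizing p with
  | _ d ih =>
  intro hp
  by_cases hconst : ∀ i, pderiv i p = 0
  · rw [eq_C_coeff_zero_of_forall_pderiv_eq_zero hconst, aeval_C, algebraMap_eq,
      C_eq_zero] at hp
    rw [eq_C_coeff_zero_of_forall_pderiv_eq_zero hconst, hp, C_0]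
  push Not at hconst
  obtain ⟨i, hi⟩ := hconst
  refine absurd (Matrix.exists_vecMul_eq_zero_iff.1 ⟨fun k => aeval f (pderiv k p), ?_, ?_⟩) h
  · exact fun h0 => hi (ih _ (hd ▸ totalDegree_pderiv_lt hi) _ rfl (congrFun h0 i))
  · funext v
    rw [Pi.zero_apply, ← map_zero (pderiv v), ← hp, pderiv_aeval]
    rfl

end MvPolynomial

section CycleModel

variable {n : ℕ}

theorem x19_injective : Function.Injective (x19 n) := fun a b h =>
  Fin.ext (by simpa using congrArg Fin.val (X_injective h))

theorem pderiv_x19_eq_zero {v : Fin (n + 2)} (hv : n - 1 ≤ v.1) (t : Fin (n - 1)) :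
    pderiv v (x19 n t) = 0 :=
  pderiv_X_of_ne fun h => by
    have := congrArg Fin.val h
    simp only at this
    omega

theorem pderiv_eq_zero_of_mem_adjoin_x19 {v : Fin (n + 2)} (hv : n - 1 ≤ v.1)
    {p : MvPolynomial (Fin (n + 2)) ℝ} (hp : p ∈ Algebra.adjoin ℝ (Set.range (x19 n))) :
    pderiv v p = 0 :=
  pderiv_eq_zero_of_mem_adjoin (by rintro _ ⟨t, rfl⟩; exact pderiv_x19_eq_zero hv t) hp

theorem esymOn_x19_mem_adjoin (s : Finset (Fin (n - 1))) (m : ℕ) :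
    esymOn s m (x19 n) ∈ Algebra.adjoin ℝ (Set.range (x19 n)) :=
  Algebra.adjoin_mono (Set.image_subset_range _ _) (esymOn_mem_adjoin s m _)

theorem pderiv_e19_eq_zero {v : Fin (n + 2)} (hv : n - 1 ≤ v.1) (m : ℕ) :
    pderiv v (e19 n m) = 0 :=
  pderiv_eq_zero_of_mem_adjoin_x19 hv (esymOn_x19_mem_adjoin _ _)

theorem pderiv_h19_eq_zero {v : Fin (n + 2)} (hv : n - 1 ≤ v.1) (ℓ m : ℕ) :
    pderiv v (h19 n ℓ m) = 0 :=
  pderiv_eq_zero_of_mem_adjoin_x19 hv (esymOn_x19_mem_adjoin _ _)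

theorem pderiv_K19 (hn : 1 ≤ n) {v : Fin (n + 2)} (hv : n - 1 ≤ v.1) :
    pderiv v (K19 n) = 1 := by
  obtain h | h | h : v.1 = n - 1 ∨ v.1 = n ∨ v.1 = n + 1 := by omega
  all_goals
    simp only [K19, map_add, pderiv_X, Pi.single_apply, Fin.ext_iff, h]
    split_ifs <;> first | omega | simp

/-- `Q_k = w_k · cyclePathProd n hn k`: the product `x_k ⋯ x_{n-1} xₙ` of the rate constants along
the cycle from compartment `k` back to compartment `1`. -/
noncomputable def cyclePathProd (n : ℕ) (hn : 2 ≤ n) (k : ℕ) : MvPolynomial (Fin (n + 2)) ℝ :=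
  x19 n ⟨n - 2, by omega⟩ *
    ∏ t ∈ univ.filter (fun t : Fin (n - 1) => k ≤ t.1 + 2 ∧ t.1 + 2 < n), x19 n t

theorem cyclePathProd_mem_adjoin (hn : 2 ≤ n) (k : ℕ) :
    cyclePathProd n hn k ∈ Algebra.adjoin ℝ (Set.range (x19 n)) :=
  Subalgebra.mul_mem _ (Algebra.subset_adjoin ⟨_, rfl⟩)
    (Subalgebra.prod_mem _ fun t _ => Algebra.subset_adjoin ⟨t, rfl⟩)

theorem cyclePathProd_ne_zero (hn : 2 ≤ n) (k : ℕ) : cyclePathProd n hn k ≠ 0 :=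
  mul_ne_zero (X_ne_zero _) (prod_ne_zero_iff.2 fun _ _ => X_ne_zero _)

theorem Ql19_eq (hn : 4 ≤ n) (ℓ : ℕ) :
    Ql19 n hn ℓ = X ⟨n + 1, by omega⟩ * cyclePathProd n (by omega) ℓ := by
  rw [Ql19, cyclePathProd]
  ring

theorem Qj19_eq (hn : 4 ≤ n) (j : ℕ) :
    Qj19 n hn j = X ⟨n, by omega⟩ * cyclePathProd n (by omega) j := by
  rw [Qj19, cyclePathProd]
  ring

theorem pderiv_X_mul_of_mem_adjoin_x19 {v : Fin (n + 2)} (hv : n - 1 ≤ v.1) (w : Fin (n + 2))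
    {p : MvPolynomial (Fin (n + 2)) ℝ} (hp : p ∈ Algebra.adjoin ℝ (Set.range (x19 n))) :
    pderiv v (X w * p) = pderiv v (X w) * p := by
  rw [pderiv_mul, pderiv_eq_zero_of_mem_adjoin_x19 hv hp, mul_zero, add_zero]

def xRateEquiv (n : ℕ) (hn : 1 ≤ n) : Fin (n - 1) ⊕ Fin 3 ≃ Fin (n + 2) :=
  finSumFinEquiv.trans (finCongr (by omega))

variable (hn : 4 ≤ n) (j ℓ : ℕ)

theorem f19_of_lt {m : Fin (n + 2)} (h : m.1 < n - 1) : f19 n hn j ℓ m = e19 n (m + 1) :=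
  if_pos h

section RateRows

variable {v : Fin (n + 2)} (hv : n - 1 ≤ v.1)
include hv

theorem pderiv_f19_pred : pderiv v (f19 n hn j ℓ ⟨n - 1, by omega⟩) = 1 := by
  rw [f19, if_neg (lt_irrefl _), if_pos rfl, map_add, pderiv_e19_eq_zero hv,
    pderiv_K19 (by omega) hv, zero_add]

theorem pderiv_f19_self :
    pderiv v (f19 n hn j ℓ ⟨n, by omega⟩) =
      e19 n (n + 1 - ℓ) - pderiv v (X ⟨n + 1, by omega⟩) * cyclePathProd n (by omega) ℓ := by
  simp only [f19, ↓reduceIte]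
  rw [if_neg (by omega), if_neg (by omega), Ql19_eq, map_sub, map_add,
    pderiv_X_mul_of_mem_adjoin_x19 hv _ (cyclePathProd_mem_adjoin _ _), pderiv_mul,
    pderiv_K19 (by omega) hv, pderiv_e19_eq_zero hv, pderiv_e19_eq_zero hv]
  ring

theorem pderiv_f19_succ :
    pderiv v (f19 n hn j ℓ ⟨n + 1, by omega⟩) =
      e19 n (n + 1 - j) -
        pderiv v (X ⟨n + 1, by omega⟩) * cyclePathProd n (by omega) ℓ * h19 n ℓ (ℓ - j) -
        pderiv v (X ⟨n, by omega⟩) * cyclePathProd n (by omega) j := by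
  simp only [f19]
  rw [if_neg (by omega), if_neg (by omega), if_neg (by omega), Ql19_eq, Qj19_eq, map_sub,
    map_sub, map_add, pderiv_X_mul_of_mem_adjoin_x19 hv _ (cyclePathProd_mem_adjoin _ _),
    pderiv_mul (f := X _ * _), pderiv_X_mul_of_mem_adjoin_x19 hv _ (cyclePathProd_mem_adjoin _ _),
    pderiv_mul, pderiv_K19 (by omega) hv, pderiv_e19_eq_zero hv, pderiv_e19_eq_zero hv,
    pderiv_h19_eq_zero hv]
  ring

end RateRows

theorem toBlocks₁₁_jacobianMatrix_f19 :
    ((jacobianMatrix (f19 n hn j ℓ)).submatrix (xRateEquiv n (by omega))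
      (xRateEquiv n (by omega))).toBlocks₁₁ =
      Matrix.of fun (m v : Fin (n - 1)) => esymOn (univ.erase v) m (x19 n) := by
  refine Matrix.ext fun m v => ?_
  change pderiv _ (f19 n hn j ℓ ⟨m, by omega⟩) = _
  rw [f19_of_lt hn j ℓ m.isLt]
  exact pderiv_esymOn_succ (e := fun t : Fin (n - 1) => (⟨t, by omega⟩ : Fin (n + 2)))
    (fun a b h => Fin.ext (by simpa using congrArg Fin.val h)) (mem_univ v) m

theorem toBlocks₁₂_jacobianMatrix_f19 :
    ((jacobianMatrix (f19 n hn j ℓ)).submatrix (xRateEquiv n (by omega))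
      (xRateEquiv n (by omega))).toBlocks₁₂ = 0 := by
  refine Matrix.ext fun a r => ?_
  change pderiv _ (f19 n hn j ℓ ⟨a, by omega⟩) = 0
  rw [f19_of_lt hn j ℓ a.isLt]
  exact pderiv_e19_eq_zero (Nat.le_add_right _ _) _

theorem toBlocks₂₂_jacobianMatrix_f19 :
    ((jacobianMatrix (f19 n hn j ℓ)).submatrix (xRateEquiv n (by omega))
      (xRateEquiv n (by omega))).toBlocks₂₂ = !![1, 1, 1;
      e19 n (n + 1 - ℓ), e19 n (n + 1 - ℓ), e19 n (n + 1 - ℓ) - cyclePathProd n (by omega) ℓ;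
      e19 n (n + 1 - j), e19 n (n + 1 - j) - cyclePathProd n (by omega) j,
        e19 n (n + 1 - j) - cyclePathProd n (by omega) ℓ * h19 n ℓ (ℓ - j)] := by
  have hu : xRateEquiv n (by omega) (.inr 0) = ⟨n - 1, by omega⟩ := rfl
  have hwj : xRateEquiv n (by omega) (.inr 1) = ⟨n, by omega⟩ :=
    Fin.ext (by simp [xRateEquiv]; omega)
  have hwl : xRateEquiv n (by omega) (.inr 2) = ⟨n + 1, by omega⟩ :=
    Fin.ext (by simp [xRateEquiv]; omega)
  have h1 : n - 1 ≠ n := by omega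
  have h2 : n - 1 ≠ n + 1 := by omega
  have h3 : n - 1 ≤ n + 1 := by omega
  refine Matrix.ext fun r s => ?_
  fin_cases r <;> fin_cases s <;>
    simp [Matrix.toBlocks₂₂, jacobianMatrix, hu, hwj, hwl, pderiv_f19_pred, pderiv_f19_self,
      pderiv_f19_succ, pderiv_X, h1, h2, h3]

theorem det_jacobianMatrix_f19_ne_zero : (jacobianMatrix (f19 n hn j ℓ)).det ≠ 0 := by
  rw [← Matrix.det_submatrix_equiv_self (xRateEquiv n (by omega)),
    ← Matrix.fromBlocks_toBlocks ((jacobianMatrix (f19 n hn j ℓ)).submatrix _ _),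
    toBlocks₁₂_jacobianMatrix_f19, Matrix.det_fromBlocks_zero₁₂, toBlocks₁₁_jacobianMatrix_f19,
    toBlocks₂₂_jacobianMatrix_f19, Matrix.det_fin_three_ones_sub]
  exact mul_ne_zero (det_esymOn_erase_ne_zero x19_injective)
    (neg_ne_zero.2 (mul_ne_zero (cyclePathProd_ne_zero _ _) (cyclePathProd_ne_zero _ _)))

end CycleModel

theorem stmt19_general (n j ℓ : ℕ) (hn : 4 ≤ n) :
    (Matrix.of fun (m v : Fin (n + 2)) => pderiv v (f19 n hn j ℓ m)).det ≠ 0 ∧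
    AlgebraicIndependent ℝ (f19 n hn j ℓ) :=
  ⟨det_jacobianMatrix_f19_ne_zero hn j ℓ,
    algebraicIndependent_of_det_jacobianMatrix_ne_zero (det_jacobianMatrix_f19_ne_zero hn j ℓ)⟩

/-- For the cycle model with two added outgoing edges `1 → j` and `1 → ℓ` (rates `w_j`,
`w_ℓ`), the `n + 2` listed coefficients have nonzero Jacobian determinant with respect to
the `n + 2` variables; equivalently, they are algebraically independent over `ℝ`. -/
theorem stmt19 (n j ℓ : ℕ) (hn : 4 ≤ n) (hj : 3 ≤ j) (hjl : j < ℓ) (hln : ℓ ≤ n) :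
    (Matrix.of fun (m v : Fin (n + 2)) => pderiv v (f19 n hn j ℓ m)).det ≠ 0 ∧
    AlgebraicIndependent ℝ (f19 n hn j ℓ) :=
  stmt19_general n j ℓ hn
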